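/- Let $m_1, m_2 \ge 3$ be integers and $m = m_1 + m_2$. Then $\frac{m_1 + 2\sqrt{m_1 - 1}}{2m} \le \frac{3m_1 + m_2 - 4}{4(m-2)} \le \frac{2m_1 + m_2 - 2\sqrt{m_2 - 1}}{2m}$. -/

import Mathlib

/-!
Clearing denominators, the lower inequality becomes `2 (m - 2 - 2√(m₁ - 1))² ≥ 0`.
The upper one is the lower one with the two factors exchanged: both the case-2 value
and the bounds are carried to their counterparts for `(m₂, m₁)` by `r ↦ 1 - r`.
-/

theorem range_lower_le_case2_radius_sq (x y : ℝ) (hx : 1 ≤ x) (hxy : 2 < x + y) :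
    (x + 2 * √(x - 1)) / (2 * (x + y)) ≤ (3 * x + y - 4) / (4 * (x + y - 2)) := by
  have hs : √(x - 1) ^ 2 = x - 1 := Real.sq_sqrt (by linarith)
  rw [div_le_div_iff₀ (by linarith) (by linarith)]
  linear_combination 2 * sq_nonneg (x + y - 2 - 2 * √(x - 1)) + 8 * hs

theorem case2_radius_sq_le_range_upper (x y : ℝ) (hy : 1 ≤ y) (hxy : 2 < x + y) :
    (3 * x + y - 4) / (4 * (x + y - 2)) ≤ (2 * x + y - 2 * √(y - 1)) / (2 * (x + y)) := by
  have hswap := range_lower_le_case2_radius_sq y x hy (by linarith)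
  have hcase2 : (3 * x + y - 4) / (4 * (x + y - 2)) = 1 - (3 * y + x - 4) / (4 * (y + x - 2)) := by
    field_simp [show x + y - 2 ≠ 0 by linarith, show y + x - 2 ≠ 0 by linarith]
    ring
  have hupper : (2 * x + y - 2 * √(y - 1)) / (2 * (x + y)) =
      1 - (y + 2 * √(y - 1)) / (2 * (y + x)) := by
    field_simp [show x + y ≠ 0 by linarith, show y + x ≠ 0 by linarith]
    ring
  rw [hcase2, hupper]
  linarith

theorem r1_sq_case2_in_range (m1 m2 : ℕ) (hm1 : 3 ≤ m1) (hm2 : 3 ≤ m2) :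
    ((m1 : ℝ) + 2 * Real.sqrt ((m1 : ℝ) - 1)) / (2 * ((m1 : ℝ) + m2)) ≤
      (3 * (m1 : ℝ) + m2 - 4) / (4 * ((m1 : ℝ) + m2 - 2)) ∧
    (3 * (m1 : ℝ) + m2 - 4) / (4 * ((m1 : ℝ) + m2 - 2)) ≤
      (2 * (m1 : ℝ) + m2 - 2 * Real.sqrt ((m2 : ℝ) - 1)) / (2 * ((m1 : ℝ) + m2)) := by
  have h1 : (3 : ℝ) ≤ m1 := by exact_mod_cast hm1
  have h2 : (3 : ℝ) ≤ m2 := by exact_mod_cast hm2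
  exact ⟨range_lower_le_case2_radius_sq _ _ (by linarith) (by linarith),
    case2_radius_sq_le_range_upper _ _ (by linarith) (by linarith)⟩
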